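/- Let φ ≤ ϕ be right invariant fuzzy quasi-orders on a fuzzy automaton A over alphabet X = {x₁,...,x_m}. Then the children automaton A_ϕ^c is a homomorphic image of A_φ^c via ξ(φ_u^c) = ϕ_u^c; in particular |A_ϕ^c| ≤ |A_φ^c|. -/
import Mathlib


namespace FuzzyAut

/-- Composition of fuzzy relations. -/
def rcomp {L : Type*} [CompleteLattice L] [CommMonoid L] {A B C : Type*}
    (α : A → B → L) (β : B → C → L) : A → C → L :=
  fun a c => ⨆ b, α a b * β b c

/-- Composition of a fuzzy set with a fuzzy relation. -/
def scomp {L : Type*} [CompleteLattice L] [CommMonoid L] {A B : Type*}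
    (f : A → L) (α : A → B → L) : B → L :=
  fun b => ⨆ a, f a * α a b

/-- Composition of a fuzzy relation with a fuzzy set. -/
def rscomp {L : Type*} [CompleteLattice L] [CommMonoid L] {A B : Type*}
    (α : A → B → L) (g : B → L) : A → L :=
  fun a => ⨆ b, α a b * g b

/-- Scalar composition of two fuzzy sets. -/
def sscomp {L : Type*} [CompleteLattice L] [CommMonoid L] {A : Type*}
    (f g : A → L) : L := ⨆ a, f a * g a

/-- The crisp equality fuzzy relation. -/
def eqRel {L : Type*} [CompleteLattice L] [CommMonoid L] (A : Type*) : A → A → L :=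
  fun a b => ⨆ _ : a = b, (1 : L)

/-- The fuzzy transition relation extended to words. -/
def relWord {L : Type*} [CompleteLattice L] [CommMonoid L] {A X : Type*}
    (δ : X → A → A → L) : List X → A → A → L
  | [] => eqRel A
  | x :: u => rcomp (δ x) (relWord δ u)

/-- The family φ_u : φ_ε = σ∘φ, φ_{ux} = φ_u∘δ_x∘φ. -/
def phiFam {L : Type*} [CompleteLattice L] [CommMonoid L] {A X : Type*}
    (σ : A → L) (δ : X → A → A → L) (φ : A → A → L) (u : List X) : A → L :=
  u.foldl (fun f x => scomp (scomp f (δ x)) φ) (scomp σ φ)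

/-- The family ψ^u : ψ^ε = ψ∘τ, ψ^{xu} = ψ∘δ_x∘ψ^u. -/
def psiFam {L : Type*} [CompleteLattice L] [CommMonoid L] {A X : Type*}
    (τ : A → L) (δ : X → A → A → L) (ψ : A → A → L) : List X → A → L
  | [] => rscomp ψ τ
  | x :: u => rscomp ψ (rscomp (δ x) (psiFam τ δ ψ u))

/-- Reflexivity of a fuzzy relation. -/
def IsRefl {L : Type*} [CompleteLattice L] [CommMonoid L] {A : Type*}
    (φ : A → A → L) : Prop := ∀ a, φ a a = 1

/-- Transitivity of a fuzzy relation. -/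
def IsTrans {L : Type*} [CompleteLattice L] [CommMonoid L] {A : Type*}
    (φ : A → A → L) : Prop := ∀ a b c, φ a b * φ b c ≤ φ a c

/-- The child tuple φ_u^c = (φ_{ux₁},…,φ_{ux_m}, φ_u∘τ), encoded as a pair of
the function x ↦ φ_{ux} and the scalar φ_u∘τ. -/
def childTuple {L : Type*} [CompleteLattice L] [CommMonoid L] {A X : Type*}
    (σ : A → L) (δ : X → A → A → L) (φ : A → A → L) (τ : A → L)
    (u : List X) : (X → (A → L)) × L :=
  (fun x => phiFam σ δ φ (u ++ [x]), sscomp (phiFam σ δ φ u) τ)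


section Aux

variable {L : Type*} [CompleteLattice L] [CommMonoid L] {res : L → L → L}
variable (hres : ∀ x y z : L, x * y ≤ z ↔ x ≤ res y z)

include hres

lemma mul_mono_r {x y z : L} (h : x ≤ y) : x * z ≤ y * z :=
  (hres x z (y * z)).2 (h.trans ((hres y z (y * z)).1 le_rfl))

lemma mul_mono_l {x y z : L} (h : x ≤ y) : z * x ≤ z * y := by
  rw [mul_comm z x, mul_comm z y]; exact mul_mono_r hres h

lemma mul_mono {x y x' y' : L} (h : x ≤ x') (h' : y ≤ y') : x * y ≤ x' * y' :=
  (mul_mono_r hres h).trans (mul_mono_l hres h')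

lemma iSup_mul' {ι : Sort*} (f : ι → L) (x : L) :
    (⨆ i, f i) * x = ⨆ i, f i * x := by
  apply le_antisymm
  · exact (hres _ _ _).2 (iSup_le fun i => (hres _ _ _).1 (le_iSup (fun i => f i * x) i))
  · exact iSup_le fun i => mul_mono_r hres (le_iSup f i)

lemma mul_iSup' {ι : Sort*} (x : L) (f : ι → L) :
    x * (⨆ i, f i) = ⨆ i, x * f i := by
  rw [mul_comm, iSup_mul' hres]; simp only [mul_comm]

variable {A B C : Type*}

lemma scomp_assoc (f : A → L) (α : A → B → L) (β : B → C → L) :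
    scomp (scomp f α) β = scomp f (rcomp α β) := by
  funext c
  simp only [scomp, rcomp, iSup_mul' hres, mul_iSup' hres]
  rw [iSup_comm]
  exact iSup_congr fun a => iSup_congr fun b => (mul_assoc _ _ _)

lemma sscomp_assoc (f : A → L) (α : A → B → L) (g : B → L) :
    sscomp (scomp f α) g = sscomp f (rscomp α g) := by
  simp only [sscomp, scomp, rscomp, iSup_mul' hres, mul_iSup' hres]
  rw [iSup_comm]
  exact iSup_congr fun a => iSup_congr fun b => (mul_assoc _ _ _)

lemma rcomp_assoc (α : A → B → L) (β : B → C → L) {D : Type*} (γ : C → D → L) :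
    rcomp (rcomp α β) γ = rcomp α (rcomp β γ) := by
  funext a d
  simp only [rcomp, iSup_mul' hres, mul_iSup' hres]
  rw [iSup_comm]
  exact iSup_congr fun b => iSup_congr fun c => (mul_assoc _ _ _)

lemma rcomp_mono {α α' : A → B → L} {β β' : B → C → L}
    (h : α ≤ α') (h' : β ≤ β') : rcomp α β ≤ rcomp α' β' := by
  intro a c
  exact iSup_le fun b => (mul_mono hres (h a b) (h' b c)).trans
    (le_iSup (fun b => α' a b * β' b c) b)

variable {ψ : A → A → L}

omit hres in
lemma rcomp_self_le (htrans : IsTrans ψ) : rcomp ψ ψ ≤ ψ := fun a c =>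
  iSup_le fun b => htrans a b c

omit hres in
lemma le_rcomp_left (hrefl : IsRefl ψ) (β : A → C → L) : β ≤ rcomp ψ β := by
  intro a c
  have : ψ a a * β a c ≤ rcomp ψ β a c := le_iSup (fun b => ψ a b * β b c) a
  simpa [hrefl a] using this

lemma rel_key (hrefl : IsRefl ψ) (htrans : IsTrans ψ)
    (δx : A → A → L) (hd : rcomp ψ δx ≤ rcomp δx ψ) :
    rcomp ψ (rcomp δx ψ) = rcomp δx ψ := by
  apply le_antisymm
  · rw [← rcomp_assoc hres]
    calc rcomp (rcomp ψ δx) ψ ≤ rcomp (rcomp δx ψ) ψ := rcomp_mono hres hd le_rfl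
    _ = rcomp δx (rcomp ψ ψ) := rcomp_assoc hres _ _ _
    _ ≤ rcomp δx ψ := rcomp_mono hres le_rfl (rcomp_self_le htrans)
  · exact le_rcomp_left hrefl _

omit hres in
lemma tau_eq (hrefl : IsRefl ψ) (τ : A → L) (ht : rscomp ψ τ ≤ τ) :
    rscomp ψ τ = τ := by
  apply le_antisymm ht
  intro a
  have : ψ a a * τ a ≤ rscomp ψ τ a := le_iSup (fun b => ψ a b * τ b) a
  simpa [hrefl a] using this

lemma rcomp_eq_of_le {φ ϕ : A → A → L} (hrefl : IsRefl φ)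
    (htrans : IsTrans ϕ) (hle : φ ≤ ϕ) : rcomp φ ϕ = ϕ := by
  apply le_antisymm
  · exact (rcomp_mono hres hle le_rfl).trans (rcomp_self_le htrans)
  · exact le_rcomp_left hrefl _

variable {X : Type*} (σ : A → L) (δ : X → A → A → L)

/-- The word family σ_u. -/
def sigWord (u : List X) : A → L := u.foldl (fun f x => scomp f (δ x)) σ

lemma phiFam_aux (hrefl : IsRefl ψ) (htrans : IsTrans ψ)
    (hd : ∀ x : X, rcomp ψ (δ x) ≤ rcomp (δ x) ψ) :
    ∀ (u : List X) (f : A → L),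
      u.foldl (fun f x => scomp (scomp f (δ x)) ψ) (scomp f ψ)
        = scomp (u.foldl (fun f x => scomp f (δ x)) f) ψ := by
  intro u
  induction u with
  | nil => intro f; rfl
  | cons x u ih =>
    intro f
    have key : scomp (scomp (scomp f ψ) (δ x)) ψ = scomp (scomp f (δ x)) ψ := by
      rw [scomp_assoc hres, scomp_assoc hres, scomp_assoc hres,
        rel_key hres hrefl htrans (δ x) (hd x)]
    simpa [key] using ih (scomp f (δ x))

lemma phiFam_eq (hrefl : IsRefl ψ) (htrans : IsTrans ψ)
    (hd : ∀ x : X, rcomp ψ (δ x) ≤ rcomp (δ x) ψ) (u : List X) :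
    phiFam σ δ ψ u = scomp (sigWord σ δ u) ψ :=
  phiFam_aux hres δ hrefl htrans hd u σ

end Aux

/-- for right invariant fuzzy quasi-orders φ ≤ ϕ, the children
automaton A_ϕ^c is a homomorphic image of A_φ^c via ξ(φ_u^c) = ϕ_u^c;
in particular |A_ϕ^c| ≤ |A_φ^c|. -/
theorem stmt18 {L : Type*} [CompleteLattice L] [CommMonoid L] (res : L → L → L) (hres : ∀ x y z : L, x * y ≤ z ↔ x ≤ res y z) (htop : ∀ x : L, x ≤ 1)
    {A X : Type*} (σ : A → L) (δ : X → A → A → L) (τ : A → L)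
    (φ ϕ : A → A → L)
    (hrefl₁ : IsRefl φ) (htrans₁ : IsTrans φ)
    (hd₁ : ∀ x : X, rcomp φ (δ x) ≤ rcomp (δ x) φ) (ht₁ : rscomp φ τ ≤ τ)
    (hrefl₂ : IsRefl ϕ) (htrans₂ : IsTrans ϕ)
    (hd₂ : ∀ x : X, rcomp ϕ (δ x) ≤ rcomp (δ x) ϕ) (ht₂ : rscomp ϕ τ ≤ τ)
    (hle : φ ≤ ϕ) :
    ∃ ξ : {p : (X → (A → L)) × L // ∃ u : List X, p = childTuple σ δ φ τ u} →
          {p : (X → (A → L)) × L // ∃ u : List X, p = childTuple σ δ ϕ τ u},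
      (∀ u : List X, (ξ ⟨childTuple σ δ φ τ u, u, rfl⟩).1 = childTuple σ δ ϕ τ u) ∧
      Function.Surjective ξ ∧
      (∀ s, (ξ s).1.2 = s.1.2) ∧
      Cardinal.mk {p : (X → (A → L)) × L // ∃ u : List X, p = childTuple σ δ ϕ τ u} ≤
        Cardinal.mk {p : (X → (A → L)) × L // ∃ u : List X, p = childTuple σ δ φ τ u} := by
  -- the winding map on tuples
  set F : ((X → (A → L)) × L) → ((X → (A → L)) × L) :=
    fun p => (fun x => scomp (p.1 x) ϕ, p.2) with hF
  -- key computation: F transports φ-tuples to ϕ-tuples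
  have hphi : ∀ u : List X, phiFam σ δ ϕ u = scomp (phiFam σ δ φ u) ϕ := by
    intro u
    rw [phiFam_eq hres σ δ hrefl₂ htrans₂ hd₂ u,
        phiFam_eq hres σ δ hrefl₁ htrans₁ hd₁ u,
        scomp_assoc hres, rcomp_eq_of_le hres hrefl₁ htrans₂ hle]
  have hscal : ∀ u : List X,
      sscomp (phiFam σ δ ϕ u) τ = sscomp (phiFam σ δ φ u) τ := by
    intro u
    rw [phiFam_eq hres σ δ hrefl₂ htrans₂ hd₂ u,
        phiFam_eq hres σ δ hrefl₁ htrans₁ hd₁ u,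
        sscomp_assoc hres, sscomp_assoc hres,
        tau_eq hrefl₂ τ ht₂, tau_eq hrefl₁ τ ht₁]
  have hkey : ∀ u : List X, F (childTuple σ δ φ τ u) = childTuple σ δ ϕ τ u := by
    intro u
    unfold childTuple
    simp only [hF]
    refine Prod.ext ?_ ?_
    · funext x
      exact (hphi (u ++ [x])).symm
    · exact (hscal u).symm
  refine ⟨fun s => ⟨F s.1, ?_⟩, ?_, ?_, ?_, ?_⟩
  · obtain ⟨p, u, hp⟩ := s
    exact ⟨u, by simp [hp, hkey u]⟩
  · intro u; exact hkey u
  · rintro ⟨p, u, rfl⟩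
    exact ⟨⟨childTuple σ δ φ τ u, u, rfl⟩, Subtype.ext (hkey u)⟩
  · intro s; rfl
  · exact Cardinal.mk_le_of_surjective (f := fun s => ⟨F s.1, by
      obtain ⟨p, u, hp⟩ := s; exact ⟨u, by simp [hp, hkey u]⟩⟩)
      (by rintro ⟨p, u, rfl⟩; exact ⟨⟨childTuple σ δ φ τ u, u, rfl⟩, Subtype.ext (hkey u)⟩)


end FuzzyAut
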